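/- Rayleigh quotient upper bound for the ground state energy: let V ∈ C(𝕋) with V ≥ 0, V(0) = 0, and V(x) ≤ Kx² for |x| ≤ ρ. Then the principal eigenvalue E(ε) of −2ε² d²/dx² + V on 𝕋 satisfies E(ε) ≤ Cε for all sufficiently small ε > 0, where C depends only on K and ρ. In particular, E(ε) is characterized by E(ε) = inf { ∫(2ε²|v'|² + Vv²)dx / ∫v² dx : v ∈ H¹(𝕋), v ≠ 0 }. -/

import Mathlib

/-!
Test the Rayleigh quotient with `v = (max (cos 2πx - 1 + 8δ²) 0)²`, a `C¹` periodic bump of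
width `δ` and height of order `δ⁴`. Its mass `∫ v²` is of order `δ⁹`, its kinetic energy
`∫ v'²` of order `δ⁷`, and `V ≤ K δ²` on its support, so the quotient is
`O(ε² / δ² + K δ²)`; the choice `δ = √ε` makes it `O(ε)`.
-/

open Real MeasureTheory

theorem hasDerivAt_max_zero_sq (t : ℝ) :
    HasDerivAt (fun s : ℝ => max s 0 ^ 2) (2 * max t 0) t := by
  rcases lt_trichotomy t 0 with ht | rfl | ht
  · have hloc : (fun s : ℝ => max s 0 ^ 2) =ᶠ[nhds t] fun _ => 0 := by
      filter_upwards [gt_mem_nhds ht] with s hs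
      simp [max_eq_right hs.le]
    simpa [max_eq_right ht.le] using (hasDerivAt_const t (0 : ℝ)).congr_of_eventuallyEq hloc
  · rw [hasDerivAt_iff_isLittleO_nhds_zero]
    refine (Asymptotics.isBigO_of_le _ fun h => ?_).trans_isLittleO
      (Asymptotics.isLittleO_pow_id (n := 2) one_lt_two)
    have : max h 0 ^ 2 ≤ h ^ 2 := by
      rcases le_total h 0 with hh | hh <;> simp [hh, sq_nonneg]
    simpa using this
  · have hloc : (fun s : ℝ => max s 0 ^ 2) =ᶠ[nhds t] fun s => s ^ 2 := by
      filter_upwards [lt_mem_nhds ht] with s hs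
      rw [max_eq_left hs.le]
    simpa [max_eq_left ht.le] using (hasDerivAt_pow 2 t).congr_of_eventuallyEq hloc

theorem contDiff_max_zero_sq : ContDiff ℝ 1 (fun s : ℝ => max s 0 ^ 2) := by
  rw [contDiff_one_iff_deriv]
  refine ⟨fun t => (hasDerivAt_max_zero_sq t).differentiableAt, ?_⟩
  rw [funext fun t => (hasDerivAt_max_zero_sq t).deriv]
  fun_prop

theorem Function.Periodic.deriv {𝕜 F : Type*} [NontriviallyNormedField 𝕜]
    [NormedAddCommGroup F] [NormedSpace 𝕜 F] {f : 𝕜 → F} {c : 𝕜} (h : Function.Periodic f c) :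
    Function.Periodic (deriv f) c := fun x => by
  rw [← deriv_comp_add_const, funext h]

theorem integral_zero_one_le_of_eq_zero_off {P : ℝ → ℝ} {δ M : ℝ} (hP : Continuous P)
    (hper : Function.Periodic P 1) (hδ : 0 ≤ δ) (hδ' : δ ≤ 1 / 2)
    (hzero : ∀ x, δ ≤ |x| → |x| ≤ 1 / 2 → P x = 0) (hM : ∀ x, |x| ≤ δ → P x ≤ M) :
    ∫ x in (0:ℝ)..1, P x ≤ 2 * δ * M := by
  have hcentre : ∫ x in (0:ℝ)..1, P x = ∫ x in (-(1 / 2) : ℝ)..1 / 2, P x := by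
    have h := hper.intervalIntegral_add_eq 0 (-(1 / 2))
    norm_num at h
    exact h
  have hsupp : ∫ x in (-(1 / 2) : ℝ)..1 / 2, P x = ∫ x in -δ..δ, P x := by
    rw [intervalIntegral.integral_of_le (by norm_num),
      intervalIntegral.integral_of_le (by linarith)]
    refine setIntegral_eq_of_subset_of_forall_sdiff_eq_zero measurableSet_Ioc
      (Set.Ioc_subset_Ioc (by linarith) hδ') fun x ⟨⟨hx₁, hx₂⟩, hx⟩ => hzero x ?_ ?_
    · simp only [Set.mem_Ioc, not_and_or, not_lt, not_le] at hx
      exact le_abs'.2 (hx.imp id le_of_lt)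
    · exact abs_le.2 ⟨hx₁.le, hx₂⟩
  have hbound : ∫ x in -δ..δ, P x ≤ ∫ _ in -δ..δ, M :=
    intervalIntegral.integral_mono_on (by linarith) (hP.intervalIntegrable _ _)
      intervalIntegrable_const fun x hx => hM x (abs_le.2 hx)
  rw [hcentre, hsupp]
  simpa [two_mul] using hbound

noncomputable def rayleighQuotient (ε : ℝ) (V v : ℝ → ℝ) : ℝ :=
  (∫ x in (0:ℝ)..1, (2 * ε ^ 2 * (deriv v x) ^ 2 + V x * (v x) ^ 2)) /
    (∫ x in (0:ℝ)..1, (v x) ^ 2)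

theorem rayleighQuotient_nonneg {ε : ℝ} {V : ℝ → ℝ} (hV : ∀ x, 0 ≤ V x) (v : ℝ → ℝ) :
    0 ≤ rayleighQuotient ε V v :=
  div_nonneg (intervalIntegral.integral_nonneg zero_le_one fun x _ =>
      add_nonneg (by positivity) (mul_nonneg (hV x) (sq_nonneg _)))
    (intervalIntegral.integral_nonneg zero_le_one fun x _ => sq_nonneg _)

/-- On `|x| ≤ 1/2` one has `8x² ≤ 1 - cos 2πx ≤ 2π²x²`, so `bump δ` vanishes for
`δ ≤ |x| ≤ 1/2` and is at least `3δ²` for `|x| ≤ δ/2`. -/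
noncomputable def bump (δ x : ℝ) : ℝ := max (cos (2 * π * x) - 1 + 8 * δ ^ 2) 0

noncomputable def trialFunction (δ x : ℝ) : ℝ := bump δ x ^ 2

section TrialFunction

variable {δ x : ℝ}

theorem bump_nonneg : 0 ≤ bump δ x := le_max_right _ _

theorem bump_le : bump δ x ≤ 8 * δ ^ 2 :=
  max_le (by linarith [cos_le_one (2 * π * x)]) (by positivity)

theorem bump_eq_zero (hδ : 0 ≤ δ) (hδx : δ ≤ |x|) (hx : |x| ≤ 1 / 2) : bump δ x = 0 := by
  have hcos : cos (2 * π * x) ≤ 1 - 2 / π ^ 2 * (2 * π * x) ^ 2 := by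
    refine cos_le_one_sub_mul_cos_sq ?_
    rw [abs_mul, abs_of_pos two_pi_pos]
    nlinarith [pi_pos]
  have hsq : δ ^ 2 ≤ x ^ 2 := by simpa only [sq_abs] using pow_le_pow_left₀ hδ hδx 2
  have : 2 / π ^ 2 * (2 * π * x) ^ 2 = 8 * x ^ 2 := by field_simp; ring
  exact max_eq_right (by linarith)

theorem three_mul_sq_le_bump (hx : |x| ≤ δ / 2) : 3 * δ ^ 2 ≤ bump δ x := by
  have hcos := one_sub_sq_div_two_le_cos (x := 2 * π * x)
  have hsq : x ^ 2 ≤ (δ / 2) ^ 2 := by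
    simpa only [sq_abs] using pow_le_pow_left₀ (abs_nonneg x) hx 2
  have hπ : π ^ 2 ≤ 10 := by nlinarith [pi_lt_d2, pi_pos]
  refine le_max_of_le_left ?_
  nlinarith [mul_le_mul hπ hsq (sq_nonneg x) (by norm_num)]

theorem periodic_trialFunction : Function.Periodic (trialFunction δ) 1 := fun x => by
  simp only [trialFunction, bump, mul_add, mul_one, cos_add_two_pi]

theorem hasDerivAt_trialFunction :
    HasDerivAt (trialFunction δ) (2 * bump δ x * -(sin (2 * π * x) * (2 * π))) x := by
  have hinner : HasDerivAt (fun y => cos (2 * π * y) - 1 + 8 * δ ^ 2)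
      (-(sin (2 * π * x) * (2 * π))) x := by
    simpa using (((hasDerivAt_id x).const_mul (2 * π)).cos.sub_const 1).add_const (8 * δ ^ 2)
  exact (hasDerivAt_max_zero_sq _).comp x hinner

theorem contDiff_trialFunction : ContDiff ℝ 1 (trialFunction δ) :=
  contDiff_max_zero_sq.comp (by fun_prop)

theorem sq_deriv_trialFunction_le (hx : |x| ≤ δ) :
    deriv (trialFunction δ) x ^ 2 ≤ 4096 * π ^ 4 * δ ^ 6 := by
  have hsin : sin (2 * π * x) ^ 2 ≤ 4 * π ^ 2 * δ ^ 2 := by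
    have hsq : x ^ 2 ≤ δ ^ 2 := by
      simpa only [sq_abs] using pow_le_pow_left₀ (abs_nonneg x) hx 2
    nlinarith [sin_sq_le_sq (x := 2 * π * x), pi_pos]
  have hbump : bump δ x ^ 2 ≤ (8 * δ ^ 2) ^ 2 := pow_le_pow_left₀ bump_nonneg bump_le 2
  rw [hasDerivAt_trialFunction.deriv]
  calc (2 * bump δ x * -(sin (2 * π * x) * (2 * π))) ^ 2
      = 16 * π ^ 2 * (bump δ x ^ 2 * sin (2 * π * x) ^ 2) := by ring
    _ ≤ 16 * π ^ 2 * ((8 * δ ^ 2) ^ 2 * (4 * π ^ 2 * δ ^ 2)) := by gcongr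
    _ = 4096 * π ^ 4 * δ ^ 6 := by ring

end TrialFunction

theorem integral_sq_trialFunction_ge {δ : ℝ} (hδ : 0 ≤ δ) (hδ' : δ ≤ 2) :
    81 / 2 * δ ^ 9 ≤ ∫ x in (0:ℝ)..1, trialFunction δ x ^ 2 := by
  have hcont : Continuous fun x => trialFunction δ x ^ 2 :=
    contDiff_trialFunction.continuous.pow 2
  have hlow : ∀ x ∈ Set.Icc 0 (δ / 2), 81 * δ ^ 8 ≤ trialFunction δ x ^ 2 := fun x hx => by
    have h := pow_le_pow_left₀ (by positivity) (three_mul_sq_le_bump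
      (by rw [abs_of_nonneg hx.1]; exact hx.2)) 4
    calc 81 * δ ^ 8 = (3 * δ ^ 2) ^ 4 := by ring
      _ ≤ bump δ x ^ 4 := h
      _ = trialFunction δ x ^ 2 := by rw [trialFunction]; ring
  calc 81 / 2 * δ ^ 9 = ∫ _ in (0:ℝ)..δ / 2, 81 * δ ^ 8 := by
        rw [intervalIntegral.integral_const, smul_eq_mul]; ring
    _ ≤ ∫ x in (0:ℝ)..δ / 2, trialFunction δ x ^ 2 :=
      intervalIntegral.integral_mono_on (by positivity) intervalIntegrable_const
        (hcont.intervalIntegrable _ _) hlow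
    _ ≤ ∫ x in (0:ℝ)..1, trialFunction δ x ^ 2 :=
      intervalIntegral.integral_mono_interval le_rfl (by positivity) (by linarith)
        (Filter.Eventually.of_forall fun x => sq_nonneg _) (hcont.intervalIntegrable _ _)

theorem rayleighQuotient_trialFunction_le {V : ℝ → ℝ} {K ρ δ : ℝ} (hVc : Continuous V)
    (hVper : Function.Periodic V 1) (hK : 0 ≤ K) (hVK : ∀ x, |x| ≤ ρ → V x ≤ K * x ^ 2)
    (hδ : 0 < δ) (hδρ : δ ≤ ρ) (hδ' : δ ≤ 1 / 2) :
    rayleighQuotient (δ ^ 2) V (trialFunction δ) ≤ 512 * (π ^ 4 + K) * δ ^ 2 := by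
  have hden := integral_sq_trialFunction_ge hδ.le (by linarith)
  have hnum : ∫ x in (0:ℝ)..1, (2 * (δ ^ 2) ^ 2 * deriv (trialFunction δ) x ^ 2
      + V x * trialFunction δ x ^ 2) ≤ 2 * δ * (4096 * (2 * π ^ 4 + K) * δ ^ 10) := by
    have hT := contDiff_trialFunction (δ := δ)
    have hT' := hT.continuous_deriv le_rfl
    refine integral_zero_one_le_of_eq_zero_off (by fun_prop) (fun x => ?_) hδ.le hδ'
      (fun x hδx hx => ?_) fun x hx => ?_
    · simp only [periodic_trialFunction.deriv x, periodic_trialFunction x, hVper x]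
    · simp [hasDerivAt_trialFunction.deriv, trialFunction, bump_eq_zero hδ.le hδx hx]
    · have hV : V x ≤ K * δ ^ 2 := by
        have hsq : x ^ 2 ≤ δ ^ 2 := by
          simpa only [sq_abs] using pow_le_pow_left₀ (abs_nonneg x) hx 2
        nlinarith [hVK x (hx.trans hδρ)]
      have hv : trialFunction δ x ^ 2 ≤ (8 * δ ^ 2) ^ 4 := by
        rw [trialFunction, ← pow_mul]; exact pow_le_pow_left₀ bump_nonneg bump_le 4
      calc 2 * (δ ^ 2) ^ 2 * deriv (trialFunction δ) x ^ 2 + V x * trialFunction δ x ^ 2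
          ≤ 2 * (δ ^ 2) ^ 2 * (4096 * π ^ 4 * δ ^ 6) + K * δ ^ 2 * (8 * δ ^ 2) ^ 4 := by
            gcongr
            exact sq_deriv_trialFunction_le hx
        _ = 4096 * (2 * π ^ 4 + K) * δ ^ 10 := by ring
  rw [rayleighQuotient, div_le_iff₀ (lt_of_lt_of_le (by positivity) hden)]
  calc _ ≤ 2 * δ * (4096 * (2 * π ^ 4 + K) * δ ^ 10) := hnum
    _ ≤ 512 * (π ^ 4 + K) * δ ^ 2 * (81 / 2 * δ ^ 9) := by
      have : 0 ≤ π ^ 4 * δ ^ 11 := by positivity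
      nlinarith [mul_nonneg hK (pow_pos hδ 11).le]
    _ ≤ 512 * (π ^ 4 + K) * δ ^ 2 * ∫ x in (0:ℝ)..1, trialFunction δ x ^ 2 := by gcongr

/-- Rayleigh-quotient upper bound: if `V ≥ 0` is continuous, `1`-periodic, `V(0) = 0`,
and `V(x) ≤ K x²` for `|x| ≤ ρ`, then the principal eigenvalue
`E(ε) = inf { ∫(2ε²|v'|² + Vv²) / ∫v² }` of `−2ε² d²/dx² + V` on `𝕋` satisfies
`E(ε) ≤ Cε` for all small `ε > 0`, with `C` depending only on `K` and `ρ`. -/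
theorem stmt16 (K ρ : ℝ) (hK : 0 < K) (hρ : 0 < ρ) :
    ∃ C > 0, ∃ ε₀ > 0, ∀ V : ℝ → ℝ,
      Continuous V → (∀ x, V (x + 1) = V x) → (∀ x, 0 ≤ V x) → V 0 = 0 →
      (∀ x : ℝ, |x| ≤ ρ → V x ≤ K * x ^ 2) →
      ∀ ε : ℝ, 0 < ε → ε < ε₀ →
        sInf { e : ℝ | ∃ v : ℝ → ℝ,
            ContDiff ℝ 1 v ∧ (∀ x, v (x + 1) = v x) ∧
            (∫ x in (0:ℝ)..1, (v x) ^ 2) ≠ 0 ∧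
            e = (∫ x in (0:ℝ)..1, (2 * ε ^ 2 * (deriv v x) ^ 2 + V x * (v x) ^ 2)) /
                  (∫ x in (0:ℝ)..1, (v x) ^ 2) }
          ≤ C * ε := by
  refine ⟨512 * (π ^ 4 + K), by positivity, min (ρ ^ 2) (1 / 4), by positivity, ?_⟩
  intro V hVc hVper hV _ hVK ε hε hεε₀
  set δ := √ε
  have hδ : 0 < δ := sqrt_pos.2 hε
  have hεδ : ε = δ ^ 2 := (sq_sqrt hε.le).symm
  have hδρ : δ ≤ ρ := sqrt_le_left hρ.le |>.2 (by linarith [min_le_left (ρ ^ 2) (1 / 4)])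
  have hδ' : δ ≤ 1 / 2 :=
    sqrt_le_left (by norm_num) |>.2 (by linarith [min_le_right (ρ ^ 2) (1 / 4)])
  have hden : (∫ x in (0:ℝ)..1, trialFunction δ x ^ 2) ≠ 0 :=
    (lt_of_lt_of_le (by positivity) (integral_sq_trialFunction_ge hδ.le (by linarith))).ne'
  refine le_trans (b := rayleighQuotient ε V (trialFunction δ)) (csInf_le ⟨0, ?_⟩
    ⟨trialFunction δ, contDiff_trialFunction, periodic_trialFunction, hden, rfl⟩) ?_
  · rintro _ ⟨v, -, -, -, rfl⟩
    exact rayleighQuotient_nonneg hV v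
  · rw [hεδ]
    exact rayleighQuotient_trialFunction_le hVc hVper hK.le hVK hδ hδρ hδ'
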